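/- For every U ∈ ℕ₊ and M > 0, the approximate product satisfies, for all x, y ∈ [0,M]: |×̃_{M,U}(x,y) − xy| ≤ M²/2^{2U} and 0 ≤ ×̃_{M,U}(x,y) ≤ M². -/

import Mathlib

noncomputable section

open Finset

/-- The sawtooth function `T₁`. -/
def T1 (x : ℝ) : ℝ := if x ≤ 1 / 2 then 2 * x else 2 * (1 - x)

/-- `R_U(x) = x - ∑_{i=1}^U T_i(x)/4^i`, where `T_i = T₁∘⋯∘T₁` (`i` times). -/
def RU (U : ℕ) (x : ℝ) : ℝ := x - ∑ i ∈ Finset.Icc 1 U, T1^[i] x / 4 ^ i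

lemma T1_of_le {t : ℝ} (h : t ≤ 1/2) : T1 t = 2*t := if_pos h

lemma T1_of_ge {t : ℝ} (h : 1/2 ≤ t) : T1 t = 2*(1-t) := by
  rw [T1]
  split_ifs with h'
  · have : t = 1/2 := le_antisymm h' h
    rw [this]; norm_num
  · rfl

lemma T1_mem {t : ℝ} (h : t ∈ Set.Icc (0:ℝ) 1) : T1 t ∈ Set.Icc (0:ℝ) 1 := by
  obtain ⟨h0, h1⟩ := h
  rw [T1]; split_ifs with h' <;> constructor <;> linarith

lemma T1_iter_mem (i : ℕ) {t : ℝ} (h : t ∈ Set.Icc (0:ℝ) 1) :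
    T1^[i] t ∈ Set.Icc (0:ℝ) 1 := by
  induction i with
  | zero => simpa using h
  | succ n ih => rw [Function.iterate_succ_apply']; exact T1_mem ih

lemma RU_zero (t : ℝ) : RU 0 t = t := by simp [RU]

lemma RU_rec (U : ℕ) (t : ℝ) : RU (U+1) t = (t - T1 t / 2) + (1/4) * RU U (T1 t) := by
  unfold RU
  rw [← Finset.Ico_add_one_right_eq_Icc, ← Finset.Ico_add_one_right_eq_Icc, Finset.sum_Ico_eq_sum_range,
    Finset.sum_Ico_eq_sum_range]
  simp only [Nat.add_sub_cancel, Nat.succ_sub_one]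
  rw [Finset.sum_range_succ']
  have h1 : ∀ i ∈ Finset.range U,
      T1^[1+(i+1)] t / (4:ℝ) ^ (1+(i+1)) = (1/4) * (T1^[1+i] (T1 t) / 4 ^ (1+i)) := by
    intro i _
    have : T1^[1+(i+1)] t = T1^[1+i] (T1 t) := by
      rw [show 1+(i+1) = (1+i)+1 by ring, Function.iterate_succ_apply]
    rw [this, show 1+(i+1) = (1+i)+1 by ring, pow_succ]
    ring
  rw [Finset.sum_congr rfl h1, ← Finset.mul_sum]
  norm_num [Function.iterate_one]
  ring
lemma RU_succ_top (U : ℕ) (t : ℝ) :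
    RU (U+1) t = RU U t - T1^[U+1] t / 4 ^ (U+1) := by
  unfold RU
  rw [Finset.sum_Icc_succ_top (Nat.le_add_left 1 U)]
  ring

lemma RU_eq_sq (U : ℕ) (t : ℝ) :
    RU U t = t^2 + (T1^[U] t - (T1^[U] t)^2) / 4^U := by
  induction U with
  | zero => simp [RU_zero]
  | succ n ih =>
    rw [RU_succ_top, ih, Function.iterate_succ_apply']
    set τ := T1^[n] t with hτ
    have h4 : (4:ℝ)^n ≠ 0 := by positivity
    rcases le_or_gt τ (1/2) with h | h
    · rw [T1_of_le h, pow_succ]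
      field_simp
      ring
    · rw [T1_of_ge h.le, pow_succ]
      field_simp
      ring

lemma RU_le {t : ℝ} (U : ℕ) (h : t ∈ Set.Icc (0:ℝ) 1) : RU U t ≤ t := by
  have : 0 ≤ ∑ i ∈ Finset.Icc 1 U, T1^[i] t / 4 ^ i := by
    apply Finset.sum_nonneg
    intro i _
    have := (T1_iter_mem i h).1
    positivity
  unfold RU; linarith

lemma sq_le_RU {t : ℝ} (U : ℕ) (h : t ∈ Set.Icc (0:ℝ) 1) : t^2 ≤ RU U t := by
  rw [RU_eq_sq]
  obtain ⟨h0, h1⟩ := T1_iter_mem U h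
  have h4 : (0:ℝ) < 4^U := by positivity
  have : 0 ≤ T1^[U] t - (T1^[U] t)^2 := by nlinarith
  have := div_nonneg this h4.le
  linarith

lemma RU_mono_lip (U : ℕ) : ∀ t t' : ℝ, 0 ≤ t → t ≤ t' → t' ≤ 1 →
    RU U t ≤ RU U t' ∧ RU U t' - RU U t ≤ 2*(t'-t) := by
  induction U with
  | zero => intro t t' h0 htt h1; simp only [RU_zero]; constructor <;> linarith
  | succ n ih =>
    have H1 : ∀ t t' : ℝ, 0 ≤ t → t ≤ t' → t' ≤ 1/2 →
        RU (n+1) t ≤ RU (n+1) t' ∧ RU (n+1) t' - RU (n+1) t ≤ 2*(t'-t) := by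
      intro t t' h0 htt h1
      rw [RU_rec, RU_rec, T1_of_le (le_trans htt h1), T1_of_le h1]
      obtain ⟨m, l⟩ := ih (2*t) (2*t') (by linarith) (by linarith) (by linarith)
      constructor <;> linarith
    have H2 : ∀ t t' : ℝ, 1/2 ≤ t → t ≤ t' → t' ≤ 1 →
        RU (n+1) t ≤ RU (n+1) t' ∧ RU (n+1) t' - RU (n+1) t ≤ 2*(t'-t) := by
      intro t t' h0 htt h1
      rw [RU_rec, RU_rec, T1_of_ge h0, T1_of_ge (le_trans h0 htt)]
      obtain ⟨m, l⟩ := ih (2*(1-t')) (2*(1-t)) (by linarith) (by linarith) (by linarith)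
      constructor <;> linarith
    intro t t' h0 htt h1
    rcases le_or_gt t' (1/2) with h | h
    · exact H1 t t' h0 htt h
    rcases le_or_gt (1/2) t with h2 | h2
    · exact H2 t t' h2 htt h1
    obtain ⟨m1, l1⟩ := H1 t (1/2) h0 h2.le le_rfl
    obtain ⟨m2, l2⟩ := H2 (1/2) t' le_rfl h.le h1
    constructor <;> linarith
lemma RU_AB (U : ℕ) :
    (∀ p q : ℝ, 0 ≤ p → p ≤ 1 → 0 ≤ q → q ≤ 1 →
      RU U p + RU U q ≤ 4 * RU U ((p+q)/2)) ∧
    (∀ u v : ℝ, 0 ≤ u → u ≤ v → v ≤ 1 →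
      RU U u + RU U v + 4*(1-v) ≤ 4 * RU U (1 - (v-u)/2)) := by
  induction U with
  | zero =>
    constructor
    · intro p q hp0 hp1 hq0 hq1; simp only [RU_zero]; linarith
    · intro u v hu0 huv hv1; simp only [RU_zero]; linarith
  | succ n ih =>
    obtain ⟨A, B⟩ := ih
    have C := RU_mono_lip n
    -- Part A, assuming p ≤ q
    have A' : ∀ p q : ℝ, 0 ≤ p → p ≤ q → q ≤ 1 →
        RU (n+1) p + RU (n+1) q ≤ 4 * RU (n+1) ((p+q)/2) := by
      intro p q hp0 hpq hq1
      rcases le_or_gt q (1/2) with hq | hq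
      · -- both ≤ 1/2
        rw [RU_rec _ p, RU_rec _ q, RU_rec _ ((p+q)/2),
          T1_of_le (by linarith : p ≤ 1/2), T1_of_le hq,
          T1_of_le (by linarith : (p+q)/2 ≤ 1/2)]
        have hA := A (2*p) (2*q) (by linarith) (by linarith) (by linarith) (by linarith)
        rw [show ((2*p+2*q)/2 : ℝ) = 2*((p+q)/2) by ring] at hA
        linarith
      rcases le_or_gt (1/2) p with hp | hp
      · -- both ≥ 1/2
        rw [RU_rec _ p, RU_rec _ q, RU_rec _ ((p+q)/2),
          T1_of_ge hp, T1_of_ge (by linarith : 1/2 ≤ q),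
          T1_of_ge (by linarith : 1/2 ≤ (p+q)/2)]
        have hA := A (2*(1-p)) (2*(1-q)) (by linarith) (by linarith) (by linarith)
          (by linarith)
        rw [show ((2*(1-p)+2*(1-q))/2 : ℝ) = 2*(1-(p+q)/2) by ring] at hA
        linarith
      · -- p < 1/2 < q
        rcases le_or_gt (p+q) 1 with hs | hs
        · rw [RU_rec _ p, RU_rec _ q, RU_rec _ ((p+q)/2),
            T1_of_le (by linarith : p ≤ 1/2), T1_of_ge (by linarith : 1/2 ≤ q),
            T1_of_le (by linarith : (p+q)/2 ≤ 1/2)]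
          have hB := B (2*p) (2*(1-q)) (by linarith) (by linarith) (by linarith)
          rw [show ((1 - (2*(1-q)-2*p)/2) : ℝ) = 2*((p+q)/2) by ring] at hB
          linarith
        · rw [RU_rec _ p, RU_rec _ q, RU_rec _ ((p+q)/2),
            T1_of_le (by linarith : p ≤ 1/2), T1_of_ge (by linarith : 1/2 ≤ q),
            T1_of_ge (by linarith : 1/2 ≤ (p+q)/2)]
          have hB := B (2*(1-q)) (2*p) (by linarith) (by linarith) (by linarith)
          rw [show ((1 - (2*p-2*(1-q))/2) : ℝ) = 2*(1-(p+q)/2) by ring] at hB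
          linarith
    constructor
    · intro p q hp0 hp1 hq0 hq1
      rcases le_total p q with h | h
      · exact A' p q hp0 h hq1
      · have := A' q p hq0 h hp1
        rw [show ((q+p)/2 : ℝ) = (p+q)/2 by ring] at this
        linarith
    · -- Part B
      intro u v hu0 huv hv1
      have hw : (1:ℝ)/2 ≤ 1 - (v-u)/2 := by linarith
      rcases le_or_gt v (1/2) with hv | hv
      · -- both ≤ 1/2
        rw [RU_rec _ u, RU_rec _ v, RU_rec _ (1 - (v-u)/2),
          T1_of_le (by linarith : u ≤ 1/2), T1_of_le hv, T1_of_ge hw]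
        have hA := A (2*u) (2*v) (by linarith) (by linarith) (by linarith) (by linarith)
        rw [show ((2*u+2*v)/2 : ℝ) = u+v by ring] at hA
        obtain ⟨hm, hl⟩ := C (v-u) (u+v) (by linarith) (by linarith) (by linarith)
        rw [show ((2*(1-(1-(v-u)/2))) : ℝ) = v-u by ring]
        linarith
      rcases le_or_gt (1/2) u with hu | hu
      · -- both ≥ 1/2
        rw [RU_rec _ u, RU_rec _ v, RU_rec _ (1 - (v-u)/2),
          T1_of_ge hu, T1_of_ge (by linarith : 1/2 ≤ v), T1_of_ge hw]
        have hA := A (2*(1-u)) (2*(1-v)) (by linarith) (by linarith) (by linarith)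
          (by linarith)
        rw [show ((2*(1-u)+2*(1-v))/2 : ℝ) = 2-u-v by ring] at hA
        obtain ⟨hm, hl⟩ := C (v-u) (2-u-v) (by linarith) (by linarith) (by linarith)
        rw [show ((2*(1-(1-(v-u)/2))) : ℝ) = v-u by ring]
        linarith
      · -- u < 1/2 < v
        rcases le_or_gt (u+v) 1 with hs | hs
        · rw [RU_rec _ u, RU_rec _ v, RU_rec _ (1 - (v-u)/2),
            T1_of_le (by linarith : u ≤ 1/2), T1_of_ge (by linarith : 1/2 ≤ v),
            T1_of_ge hw]
          have hB := B (2*u) (2*(1-v)) (by linarith) (by linarith) (by linarith)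
          rw [show ((1 - (2*(1-v)-2*u)/2) : ℝ) = u+v by ring] at hB
          obtain ⟨hm, hl⟩ := C (v-u) (u+v) (by linarith) (by linarith) (by linarith)
          rw [show ((2*(1-(1-(v-u)/2))) : ℝ) = v-u by ring]
          linarith
        · rw [RU_rec _ u, RU_rec _ v, RU_rec _ (1 - (v-u)/2),
            T1_of_le (by linarith : u ≤ 1/2), T1_of_ge (by linarith : 1/2 ≤ v),
            T1_of_ge hw]
          have hB := B (2*(1-v)) (2*u) (by linarith) (by linarith) (by linarith)
          rw [show ((1 - (2*u-2*(1-v))/2) : ℝ) = 2-u-v by ring] at hB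
          obtain ⟨hm, hl⟩ := C (v-u) (2-u-v) (by linarith) (by linarith) (by linarith)
          rw [show ((2*(1-(1-(v-u)/2))) : ℝ) = v-u by ring]
          linarith
/-- The approximate product `×̃_{M,U}`. -/
def aprod (M : ℝ) (U : ℕ) (x y : ℝ) : ℝ :=
  2 * M ^ 2 * (RU U ((x + y) / (2 * M)) - (1 / 4) * RU U (x / M) - (1 / 4) * RU U (y / M))

set_option maxHeartbeats 1000000 in
theorem stmt8 (U : ℕ) (hU : 0 < U) (M : ℝ) (hM : 0 < M)
    (x y : ℝ) (hx : x ∈ Set.Icc 0 M) (hy : y ∈ Set.Icc 0 M) :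
    |aprod M U x y - x * y| ≤ M ^ 2 / 2 ^ (2 * U) ∧
    0 ≤ aprod M U x y ∧ aprod M U x y ≤ M ^ 2 := by
  obtain ⟨hx0, hx1⟩ := hx
  obtain ⟨hy0, hy1⟩ := hy
  have hM' : M ≠ 0 := ne_of_gt hM
  set p := x / M with hp
  set q := y / M with hq
  have hp0 : 0 ≤ p := div_nonneg hx0 hM.le
  have hp1 : p ≤ 1 := (div_le_one hM).mpr hx1
  have hq0 : 0 ≤ q := div_nonneg hy0 hM.le
  have hq1 : q ≤ 1 := (div_le_one hM).mpr hy1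
  have hs : (x + y) / (2 * M) = (p + q) / 2 := by
    rw [hp, hq, ← add_div, div_div, mul_comm M 2]
  have hpm : p ∈ Set.Icc (0:ℝ) 1 := ⟨hp0, hp1⟩
  have hqm : q ∈ Set.Icc (0:ℝ) 1 := ⟨hq0, hq1⟩
  have hsm : (p+q)/2 ∈ Set.Icc (0:ℝ) 1 := ⟨by linarith, by linarith⟩
  have hxM : x = M * p := by rw [hp]; field_simp
  have hyM : y = M * q := by rw [hq]; field_simp
  have hM2 : (0:ℝ) < M^2 := by positivity
  have h4 : (0:ℝ) < 4^U := by positivity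
  have e24 : ((2:ℝ))^(2*U) = 4^U := by rw [pow_mul]; norm_num
  set a := T1^[U] ((p+q)/2) with ha
  set b := T1^[U] p with hb
  set c := T1^[U] q with hc
  obtain ⟨ha0, ha1⟩ := T1_iter_mem U hsm
  obtain ⟨hb0, hb1⟩ := T1_iter_mem U hpm
  obtain ⟨hc0, hc1⟩ := T1_iter_mem U hqm
  rw [← ha] at ha0 ha1
  rw [← hb] at hb0 hb1
  rw [← hc] at hc0 hc1
  have eap : aprod M U x y
      = 2*M^2*(RU U ((p+q)/2) - (1/4) * RU U p - (1/4) * RU U q) := by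
    unfold aprod
    rw [hs, ← hp, ← hq]
  have key : aprod M U x y - x * y
      = (2 * M^2 * ((a - a^2) - (1/4)*(b - b^2) - (1/4)*(c - c^2))) / 4^U := by
    rw [eap, RU_eq_sq U ((p+q)/2), RU_eq_sq U p, RU_eq_sq U q,
      ← ha, ← hb, ← hc, hxM, hyM]
    field_simp
    ring
  clear_value p q a b c
  clear hxM hyM hs hp hq ha hb hc
  refine ⟨?_, ?_, ?_⟩
  · -- error bound
    rw [abs_le, key, e24]
    have hXu : (a - a^2) - (1/4)*(b - b^2) - (1/4)*(c - c^2) ≤ 1/4 := by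
      nlinarith [sq_nonneg (a - 1/2), mul_nonneg hb0 (by linarith : (0:ℝ) ≤ 1 - b),
        mul_nonneg hc0 (by linarith : (0:ℝ) ≤ 1 - c)]
    have hXl : -(1/8) ≤ (a - a^2) - (1/4)*(b - b^2) - (1/4)*(c - c^2) := by
      nlinarith [sq_nonneg (b - 1/2), sq_nonneg (c - 1/2),
        mul_nonneg ha0 (by linarith : (0:ℝ) ≤ 1 - a)]
    have hnl : -(M^2) ≤ 2 * M^2 * ((a - a^2) - (1/4)*(b - b^2) - (1/4)*(c - c^2)) := by
      nlinarith [mul_nonneg hM2.le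
        (by linarith : (0:ℝ) ≤ ((a - a^2) - (1/4)*(b - b^2) - (1/4)*(c - c^2)) + 1/8)]
    have hnu : 2 * M^2 * ((a - a^2) - (1/4)*(b - b^2) - (1/4)*(c - c^2)) ≤ M^2 := by
      nlinarith [mul_nonneg hM2.le
        (by linarith : (0:ℝ) ≤ 1/4 - ((a - a^2) - (1/4)*(b - b^2) - (1/4)*(c - c^2)))]
    constructor
    · rw [show (-(M^2/4^U) : ℝ) = (-(M^2))/4^U by ring]
      exact div_le_div_of_nonneg_right hnl h4.le
    · exact div_le_div_of_nonneg_right hnu h4.le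
  · -- nonneg
    have hA := (RU_AB U).1 p q hp0 hp1 hq0 hq1
    have hD : 0 ≤ RU U ((p+q)/2) - (1/4) * RU U p - (1/4) * RU U q := by linarith
    rw [eap]
    exact mul_nonneg (by positivity) hD
  · -- upper bound
    have h1 := RU_le U hsm
    have h2 := sq_le_RU U hpm
    have h3 := sq_le_RU U hqm
    have hD : RU U ((p+q)/2) - (1/4) * RU U p - (1/4) * RU U q ≤ 1/2 := by
      nlinarith [sq_nonneg (p-1), sq_nonneg (q-1)]
    have hmul := mul_le_mul_of_nonneg_left hD (by positivity : (0:ℝ) ≤ 2*M^2)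
    have e : 2*M^2*(1/2) = M^2 := by ring
    rw [eap]
    linarith
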